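/- Let (V, μ, α) be a multiplicative Hom-Jordan algebra over a field F. If D₁ is an α^k-quasiderivation of V and D₂ lies in the α^s-quasicentroid QC_{α^s}(V) (k, s ≥ 0), then the commutator [D₁, D₂] = D₁ ∘ D₂ − D₂ ∘ D₁ lies in the α^(k+s)-quasicentroid QC_{α^(k+s)}(V). -/
import Mathlib


/-- `D` is an `α^k`-quasiderivation of the Hom-Jordan algebra `(V, μ, α)`. -/
def IsQDer {F V : Type*} [Field F] [AddCommGroup V] [Module F V]
    (μ : V →ₗ[F] V →ₗ[F] V) (α : V →ₗ[F] V) (k : ℕ) (D : V →ₗ[F] V) : Prop :=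
  D ∘ₗ α = α ∘ₗ D ∧ ∃ D' : V →ₗ[F] V,
    D' ∘ₗ α = α ∘ₗ D' ∧
    ∀ x y : V, μ (D x) ((α ^ k) y) + μ ((α ^ k) x) (D y) = D' (μ x y)

/-- `D` lies in the `α^k`-quasicentroid of the Hom-Jordan algebra `(V, μ, α)`. -/
def InQCentroid {F V : Type*} [Field F] [AddCommGroup V] [Module F V]
    (μ : V →ₗ[F] V →ₗ[F] V) (α : V →ₗ[F] V) (k : ℕ) (D : V →ₗ[F] V) : Prop :=
  D ∘ₗ α = α ∘ₗ D ∧ ∀ x y : V, μ (D x) ((α ^ k) y) = μ ((α ^ k) x) (D y)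

theorem stmt5 {F V : Type*} [Field F] [AddCommGroup V] [Module F V]
    (μ : V →ₗ[F] V →ₗ[F] V) (α : V →ₗ[F] V)
    (hcomm : ∀ x y : V, μ x y = μ y x)
    (hJ : ∀ x y : V, μ (α (α x)) (μ y (μ x x)) = μ (μ (α x) y) (α (μ x x)))
    (hmult : ∀ x y : V, α (μ x y) = μ (α x) (α y))
    (k s : ℕ) (D₁ D₂ : V →ₗ[F] V)
    (h₁ : IsQDer μ α k D₁) (h₂ : InQCentroid μ α s D₂) :
    InQCentroid μ α (k + s) (D₁ ∘ₗ D₂ - D₂ ∘ₗ D₁) := by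

  obtain ⟨hc1, D', hcD', hder⟩ := h₁
  obtain ⟨hc2, hqc⟩ := h₂
  have hc1p : ∀ x, D₁ (α x) = α (D₁ x) := fun x => congrFun (congrArg DFunLike.coe hc1) x
  have hc2p : ∀ x, D₂ (α x) = α (D₂ x) := fun x => congrFun (congrArg DFunLike.coe hc2) x
  have hc1n : ∀ (n : ℕ) (x : V), D₁ ((α ^ n) x) = (α ^ n) (D₁ x) := by
    intro n
    induction n with
    | zero => simp
    | succ m ih =>
      intro x
      rw [pow_succ, Module.End.mul_apply, Module.End.mul_apply, ih, hc1p]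
  have hc2n : ∀ (n : ℕ) (x : V), D₂ ((α ^ n) x) = (α ^ n) (D₂ x) := by
    intro n
    induction n with
    | zero => simp
    | succ m ih =>
      intro x
      rw [pow_succ, Module.End.mul_apply, Module.End.mul_apply, ih, hc2p]
  constructor
  · ext x
    simp only [LinearMap.comp_apply, LinearMap.sub_apply, map_sub, hc1p, hc2p]
  · intro x y
    have hks : ∀ z : V, (α ^ (k + s)) z = (α ^ k) ((α ^ s) z) := by
      intro z; rw [pow_add, Module.End.mul_apply]
    have hsk : ∀ z : V, (α ^ (k + s)) z = (α ^ s) ((α ^ k) z) := by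
      intro z; rw [add_comm, pow_add, Module.End.mul_apply]
    have e1 : μ (D₁ (D₂ x)) ((α ^ (k + s)) y)
        = D' (μ (D₂ x) ((α ^ s) y)) - μ ((α ^ k) (D₂ x)) (D₁ ((α ^ s) y)) := by
      rw [hks y, eq_sub_iff_add_eq, hder (D₂ x) ((α ^ s) y)]
    have e2 : μ ((α ^ k) (D₂ x)) (D₁ ((α ^ s) y)) = μ ((α ^ (k + s)) x) (D₂ (D₁ y)) := by
      rw [← hc2n k x, hc1n s y, hqc ((α ^ k) x) (D₁ y), hsk x]
    have e3 : μ (D₂ (D₁ x)) ((α ^ (k + s)) y)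
        = D' (μ (D₂ x) ((α ^ s) y)) - μ ((α ^ (k + s)) x) (D₁ (D₂ y)) := by
      have : μ (D₂ (D₁ x)) ((α ^ (k + s)) y) = μ (D₁ ((α ^ s) x)) ((α ^ k) (D₂ y)) := by
        rw [hsk y, hqc (D₁ x) ((α ^ k) y), ← hc1n s x, hc2n k y]
      rw [this, eq_sub_iff_add_eq, hks x]
      have h4 := hder ((α ^ s) x) (D₂ y)
      rw [h4]
      congr 1
      exact (hqc x y).symm
    simp only [LinearMap.sub_apply, LinearMap.comp_apply, map_sub]
    rw [e1, e2, e3]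
    ring_nf
    abel
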